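/- Let μ be a positive finite measure on the unit circle with μ([θ-s,θ+s]) ≤ h(s) for all s ∈ (0,π], where h(s) ≤ s·g(s) for a positive continuous decreasing g with μ(T) ≤ π g(π). Then for 0 ≤ r < 1, θ, and ε ∈ (0,π]: ∫_{|t-θ|>ε} P_r(t-θ) dμ(t) ≤ π g(ε). -/

import Mathlib

/-!
Write `N = -P_r'`, which is nonnegative on `[0, π]`. For `‖t - θ‖ > ε` we have
`P_r(‖t - θ‖) = P_r(π) + ∫_{‖t - θ‖}^π N`, so by Tonelli the far part of the Poisson integral is
`P_r(π) μ(far) + ∫_ε^π N(s) μ(far ∩ ball(θ, s)) ds ≤ g(ε) (π P_r(π) + ∫_ε^π s N(s) ds)`.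
Integrating by parts, `π P_r(π) + ∫_ε^π s N(s) ds = ε P_r(ε) + ∫_ε^π P_r ≤ ∫_0^π P_r = π`,
where the last inequality uses that `P_r` is decreasing.
-/

open MeasureTheory Set Real

instance : Fact (0 < 2 * π) := ⟨by positivity⟩

noncomputable def P (r t : ℝ) : ℝ := (1 - r ^ 2) / (1 + r ^ 2 - 2 * r * Real.cos t)

open scoped ENNReal

noncomputable def poissonNegDeriv (r s : ℝ) : ℝ :=
  (1 - r ^ 2) * (2 * r * Real.sin s) / (1 + r ^ 2 - 2 * r * Real.cos s) ^ 2

noncomputable def poissonPrimitive (r s : ℝ) : ℝ :=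
  s + 2 * Real.arctan (r * Real.sin s / (1 - r * Real.cos s))

section Poisson

variable {r : ℝ}

lemma poisson_denom_pos (hr0 : 0 ≤ r) (hr1 : r < 1) (s : ℝ) :
    0 < 1 + r ^ 2 - 2 * r * Real.cos s := by
  nlinarith [Real.cos_le_one s, Real.neg_one_le_cos s, sq_nonneg (1 - r), sq_nonneg (1 + r)]

lemma P_nonneg (hr0 : 0 ≤ r) (hr1 : r < 1) (s : ℝ) : 0 ≤ P r s :=
  div_nonneg (by nlinarith) (poisson_denom_pos hr0 hr1 s).le

lemma continuous_P (hr0 : 0 ≤ r) (hr1 : r < 1) : Continuous (P r) :=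
  Continuous.div (by fun_prop) (by fun_prop) fun s => (poisson_denom_pos hr0 hr1 s).ne'

lemma antitoneOn_P (hr0 : 0 ≤ r) (hr1 : r < 1) : AntitoneOn (P r) (Icc 0 π) := by
  intro a ha b hb hab
  have hnum : 0 ≤ 1 - r ^ 2 := by nlinarith
  have hcos : Real.cos b ≤ Real.cos a := Real.cos_le_cos_of_nonneg_of_le_pi ha.1 hb.2 hab
  unfold P
  gcongr
  exact poisson_denom_pos hr0 hr1 a

lemma poissonNegDeriv_nonneg (hr0 : 0 ≤ r) (hr1 : r < 1) {s : ℝ} (hs0 : 0 ≤ s) (hsπ : s ≤ π) :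
    0 ≤ poissonNegDeriv r s :=
  div_nonneg (mul_nonneg (by nlinarith) (mul_nonneg (by positivity)
    (Real.sin_nonneg_of_nonneg_of_le_pi hs0 hsπ))) (by positivity)

lemma continuous_poissonNegDeriv (hr0 : 0 ≤ r) (hr1 : r < 1) : Continuous (poissonNegDeriv r) :=
  Continuous.div (by fun_prop) (by fun_prop) fun s => pow_ne_zero _ (poisson_denom_pos hr0 hr1 s).ne'

lemma hasDerivAt_P (hr0 : 0 ≤ r) (hr1 : r < 1) (s : ℝ) :
    HasDerivAt (P r) (-poissonNegDeriv r s) s := by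
  have hD := poisson_denom_pos hr0 hr1 s
  have hd : HasDerivAt (fun s => 1 + r ^ 2 - 2 * r * Real.cos s) (2 * r * Real.sin s) s := by
    simpa using ((Real.hasDerivAt_cos s).const_mul (2 * r)).const_sub (1 + r ^ 2)
  refine ((hasDerivAt_const s (1 - r ^ 2)).div hd hD.ne').congr_deriv ?_
  unfold poissonNegDeriv
  field_simp
  ring

lemma hasDerivAt_poissonPrimitive (hr0 : 0 ≤ r) (hr1 : r < 1) (s : ℝ) :
    HasDerivAt (poissonPrimitive r) (P r s) s := by
  have hD := poisson_denom_pos hr0 hr1 s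
  have hD1 : 0 < 1 - r * Real.cos s := by nlinarith [Real.cos_le_one s, Real.neg_one_le_cos s]
  have hnum : HasDerivAt (fun s => r * Real.sin s) (r * Real.cos s) s := by
    simpa using (Real.hasDerivAt_sin s).const_mul r
  have hden : HasDerivAt (fun s => 1 - r * Real.cos s) (r * Real.sin s) s := by
    simpa [mul_comm] using ((Real.hasDerivAt_cos s).const_mul r).const_sub 1
  refine ((hasDerivAt_id s).add ((hnum.div hden hD1.ne').arctan.const_mul 2)).congr_deriv ?_
  have hs := Real.sin_sq_add_cos_sq s
  have harg : 1 + (r * Real.sin s / (1 - r * Real.cos s)) ^ 2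
      = (1 + r ^ 2 - 2 * r * Real.cos s) / (1 - r * Real.cos s) ^ 2 := by
    field_simp
    linear_combination r ^ 2 * hs
  simp only [P, Pi.div_apply, harg]
  field_simp
  linear_combination (-2 * r ^ 2) * hs

lemma integral_poissonNegDeriv (hr0 : 0 ≤ r) (hr1 : r < 1) (a b : ℝ) :
    ∫ s in a..b, poissonNegDeriv r s = P r a - P r b := by
  rw [intervalIntegral.integral_eq_sub_of_hasDerivAt
    (fun s _ => (hasDerivAt_P hr0 hr1 s).neg.congr_deriv (neg_neg _))
    ((continuous_poissonNegDeriv hr0 hr1).intervalIntegrable a b), Pi.neg_apply, Pi.neg_apply]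
  ring

lemma integral_P (hr0 : 0 ≤ r) (hr1 : r < 1) (a b : ℝ) :
    ∫ s in a..b, P r s = poissonPrimitive r b - poissonPrimitive r a :=
  intervalIntegral.integral_eq_sub_of_hasDerivAt
    (fun s _ => hasDerivAt_poissonPrimitive hr0 hr1 s) ((continuous_P hr0 hr1).intervalIntegrable a b)

lemma integral_mul_poissonNegDeriv (hr0 : 0 ≤ r) (hr1 : r < 1) (a b : ℝ) :
    ∫ s in a..b, s * poissonNegDeriv r s
      = (poissonPrimitive r b - b * P r b) - (poissonPrimitive r a - a * P r a) := by
  refine intervalIntegral.integral_eq_sub_of_hasDerivAt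
    (f := fun u => poissonPrimitive r u - u * P r u) (fun s _ => ?_)
    (Continuous.intervalIntegrable (u := fun s => s * poissonNegDeriv r s)
      (continuous_id.mul (continuous_poissonNegDeriv hr0 hr1)) a b)
  refine ((hasDerivAt_poissonPrimitive hr0 hr1 s).sub
    ((hasDerivAt_id s).mul (hasDerivAt_P hr0 hr1 s))).congr_deriv ?_
  simp only [id]
  ring

lemma mul_P_le_poissonPrimitive (hr0 : 0 ≤ r) (hr1 : r < 1) {ε : ℝ} (hε0 : 0 ≤ ε) (hεπ : ε ≤ π) :
    ε * P r ε ≤ poissonPrimitive r ε := by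
  have hmono : ∀ s ∈ Icc 0 ε, P r ε ≤ P r s := fun s hs =>
    antitoneOn_P hr0 hr1 ⟨hs.1, hs.2.trans hεπ⟩ ⟨hε0, hεπ⟩ hs.2
  have h := intervalIntegral.integral_mono_on hε0 (intervalIntegrable_const (μ := volume))
    ((continuous_P hr0 hr1).intervalIntegrable 0 ε) hmono
  rwa [intervalIntegral.integral_const, integral_P hr0 hr1, smul_eq_mul, sub_zero,
    show poissonPrimitive r 0 = 0 by simp [poissonPrimitive], sub_zero] at h

lemma pi_mul_P_pi_add_integral_le (hr0 : 0 ≤ r) (hr1 : r < 1) {ε : ℝ} (hε0 : 0 ≤ ε)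
    (hεπ : ε ≤ π) : π * P r π + ∫ s in ε..π, s * poissonNegDeriv r s ≤ π := by
  have hπ : poissonPrimitive r π = π := by simp [poissonPrimitive]
  rw [integral_mul_poissonNegDeriv hr0 hr1, hπ]
  linarith [mul_P_le_poissonPrimitive hr0 hr1 hε0 hεπ]

lemma ofReal_P_eq_add_lintegral (hr0 : 0 ≤ r) (hr1 : r < 1) {x : ℝ} (hx0 : 0 ≤ x) (hxπ : x ≤ π) :
    ENNReal.ofReal (P r x)
      = ENNReal.ofReal (P r π) + ∫⁻ s in Ioc x π, ENNReal.ofReal (poissonNegDeriv r s) := by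
  rw [← ofReal_integral_eq_lintegral_ofReal (continuous_poissonNegDeriv hr0 hr1).integrableOn_Ioc
      ((ae_restrict_iff' measurableSet_Ioc).2 (Filter.Eventually.of_forall fun s hs =>
        poissonNegDeriv_nonneg hr0 hr1 (hx0.trans hs.1.le) hs.2)),
    ← intervalIntegral.integral_of_le hxπ, integral_poissonNegDeriv hr0 hr1,
    ← ENNReal.ofReal_add (P_nonneg hr0 hr1 π)
      (sub_nonneg.2 (antitoneOn_P hr0 hr1 ⟨hx0, hxπ⟩ ⟨pi_pos.le, le_rfl⟩ hxπ))]
  ring_nf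

lemma setLIntegral_ofReal_poissonNegDeriv_mul (hr0 : 0 ≤ r) (hr1 : r < 1) {ε C : ℝ}
    (hε0 : 0 ≤ ε) (hεπ : ε ≤ π) (hC : 0 ≤ C) :
    ∫⁻ s in Ioc ε π, ENNReal.ofReal (poissonNegDeriv r s * (s * C))
      = ENNReal.ofReal (C * ∫ s in ε..π, s * poissonNegDeriv r s) := by
  have hN := continuous_poissonNegDeriv hr0 hr1
  rw [← ofReal_integral_eq_lintegral_ofReal (Continuous.integrableOn_Ioc (by fun_prop))
      ((ae_restrict_iff' measurableSet_Ioc).2 (Filter.Eventually.of_forall fun s hs =>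
        mul_nonneg (poissonNegDeriv_nonneg hr0 hr1 (hε0.trans hs.1.le) hs.2)
          (mul_nonneg (hε0.trans hs.1.le) hC))),
    intervalIntegral.integral_of_le hεπ, ← integral_const_mul]
  congr 2 with s
  ring

end Poisson

theorem setLIntegral_lintegral_Ioc_eq {X : Type*} [MeasurableSpace X] {μ : Measure X} [SFinite μ]
    {S : Set X} (hS : MeasurableSet S) {d : X → ℝ} (hd : Measurable d) {a b : ℝ}
    (had : ∀ t ∈ S, a ≤ d t) {F : ℝ → ℝ≥0∞} (hF : Measurable F) :
    ∫⁻ t in S, (∫⁻ s in Ioc (d t) b, F s) ∂μ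
      = ∫⁻ s in Ioc a b, F s * μ (S ∩ {t | d t < s}) := by
  set φ : X × ℝ → ℝ≥0∞ := {p | d p.1 < p.2}.indicator fun p => F p.2
  have hφ : Measurable φ :=
    (hF.comp measurable_snd).indicator (measurableSet_lt (hd.comp measurable_fst) measurable_snd)
  have hcut : ∀ t ∈ S, ∫⁻ s in Ioc (d t) b, F s = ∫⁻ s in Ioc a b, φ (t, s) := by
    intro t ht
    have hIoc : Ioc (d t) b = Ioi (d t) ∩ Ioc a b := by
      ext s
      simp only [mem_Ioc, mem_inter_iff, mem_Ioi]
      constructor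
      · exact fun hs => ⟨hs.1, (had t ht).trans_lt hs.1, hs.2⟩
      · exact fun hs => ⟨hs.1, hs.2.2⟩
    rw [hIoc, ← Measure.restrict_restrict measurableSet_Ioi, ← lintegral_indicator measurableSet_Ioi]
    rfl
  rw [setLIntegral_congr_fun hS hcut, lintegral_lintegral_swap (f := fun t s => φ (t, s)) hφ.aemeasurable]
  refine setLIntegral_congr_fun measurableSet_Ioc fun s _ => ?_
  have hsub : MeasurableSet {t | d t < s} := measurableSet_lt hd measurable_const
  rw [inter_comm, ← Measure.restrict_apply hsub, ← lintegral_indicator_const hsub]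
  rfl

lemma setLIntegral_P_le {X : Type*} [MeasurableSpace X] {μ : Measure X} [SFinite μ]
    {d : X → ℝ} (hd : Measurable d) (hdπ : ∀ t, d t ≤ π) {r ε C : ℝ} (hr0 : 0 ≤ r) (hr1 : r < 1)
    (hε0 : 0 ≤ ε) (hεπ : ε ≤ π) (hC : 0 ≤ C)
    (hfar : μ {t | ε < d t} ≤ ENNReal.ofReal (π * C))
    (hnear : ∀ s ∈ Ioc ε π, μ ({t | ε < d t} ∩ {t | d t < s}) ≤ ENNReal.ofReal (s * C)) :
    ∫⁻ t in {t | ε < d t}, ENNReal.ofReal (P r (d t)) ∂μ ≤ ENNReal.ofReal (π * C) := by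
  set S := {t | ε < d t}
  have hS : MeasurableSet S := measurableSet_lt measurable_const hd
  have hN0 : ∀ s ∈ Ioc ε π, 0 ≤ poissonNegDeriv r s := fun s hs =>
    poissonNegDeriv_nonneg hr0 hr1 (hε0.trans hs.1.le) hs.2
  calc ∫⁻ t in S, ENNReal.ofReal (P r (d t)) ∂μ
      = ∫⁻ t in S, (ENNReal.ofReal (P r π)
          + ∫⁻ s in Ioc (d t) π, ENNReal.ofReal (poissonNegDeriv r s)) ∂μ :=
        setLIntegral_congr_fun hS fun t ht =>
          ofReal_P_eq_add_lintegral hr0 hr1 (hε0.trans ht.le) (hdπ t)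
    _ = ENNReal.ofReal (P r π) * μ S
          + ∫⁻ s in Ioc ε π, ENNReal.ofReal (poissonNegDeriv r s) * μ (S ∩ {t | d t < s}) := by
        rw [lintegral_add_left measurable_const, setLIntegral_const,
          setLIntegral_lintegral_Ioc_eq hS hd (fun t ht => ht.le) (continuous_poissonNegDeriv hr0 hr1).measurable.ennreal_ofReal]
    _ ≤ ENNReal.ofReal (P r π) * ENNReal.ofReal (π * C)
          + ∫⁻ s in Ioc ε π, ENNReal.ofReal (poissonNegDeriv r s * (s * C)) := by
        refine add_le_add (by gcongr) (setLIntegral_mono' measurableSet_Ioc fun s hs => ?_)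
        rw [ENNReal.ofReal_mul (hN0 s hs)]
        gcongr
        exact hnear s hs
    _ = ENNReal.ofReal (C * (π * P r π + ∫ s in ε..π, s * poissonNegDeriv r s)) := by
        rw [setLIntegral_ofReal_poissonNegDeriv_mul hr0 hr1 hε0 hεπ hC, ← ENNReal.ofReal_mul (P_nonneg hr0 hr1 π), ← ENNReal.ofReal_add, mul_add]
        · ring_nf
        · exact mul_nonneg (P_nonneg hr0 hr1 π) (mul_nonneg pi_pos.le hC)
        · exact mul_nonneg hC (intervalIntegral.integral_nonneg hεπ fun s hs =>
            mul_nonneg (hε0.trans hs.1) (poissonNegDeriv_nonneg hr0 hr1 (hε0.trans hs.1) hs.2))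
    _ ≤ ENNReal.ofReal (π * C) :=
        ENNReal.ofReal_le_ofReal (by nlinarith [pi_mul_P_pi_add_integral_le hr0 hr1 hε0 hεπ])

theorem stmt13_general (μ : Measure (AddCircle (2 * π))) [IsFiniteMeasure μ]
    (h g : ℝ → ℝ)
    (hgpos : ∀ t ∈ Set.Ioc (0 : ℝ) π, 0 < g t)
    (hganti : AntitoneOn g (Set.Ioc (0 : ℝ) π))
    (hhg : ∀ s ∈ Set.Ioc (0 : ℝ) π, h s ≤ s * g s)
    (hball : ∀ (θ : AddCircle (2 * π)), ∀ s ∈ Set.Ioc (0 : ℝ) π,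
      μ (Metric.closedBall θ s) ≤ ENNReal.ofReal (h s))
    (htot : μ Set.univ ≤ ENNReal.ofReal (π * g π)) :
    ∀ r ∈ Set.Ico (0 : ℝ) 1, ∀ θ : AddCircle (2 * π), ∀ ε ∈ Set.Ioc (0 : ℝ) π,
      ∫ t in {t : AddCircle (2 * π) | ε < ‖t - θ‖}, P r ‖t - θ‖ ∂μ ≤ π * g ε := by
  rintro r ⟨hr0, hr1⟩ θ ε hε
  have hgε : 0 ≤ g ε := (hgpos ε hε).le
  have hd : Continuous fun t : AddCircle (2 * π) => ‖t - θ‖ := by fun_prop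
  have hdπ (t : AddCircle (2 * π)) : ‖t - θ‖ ≤ π := by
    simpa [abs_of_pos two_pi_pos] using AddCircle.norm_le_half_period (p := 2 * π) (x := t - θ) two_pi_pos.ne'
  have hfar : μ {t | ε < ‖t - θ‖} ≤ ENNReal.ofReal (π * g ε) :=
    (measure_mono (subset_univ _)).trans <| htot.trans <| ENNReal.ofReal_le_ofReal <|
      mul_le_mul_of_nonneg_left (hganti hε ⟨pi_pos, le_rfl⟩ hε.2) pi_pos.le
  have hnear (s : ℝ) (hs : s ∈ Ioc ε π) :
      μ ({t | ε < ‖t - θ‖} ∩ {t | ‖t - θ‖ < s}) ≤ ENNReal.ofReal (s * g ε) := by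
    have hs0 : s ∈ Ioc 0 π := ⟨hε.1.trans hs.1, hs.2⟩
    refine (measure_mono fun t ht => ?_).trans <| (hball θ s hs0).trans <|
      ENNReal.ofReal_le_ofReal <| (hhg s hs0).trans <|
        mul_le_mul_of_nonneg_left (hganti hε hs0 hs.1.le) hs0.1.le
    simpa [dist_eq_norm] using ht.2.le
  rw [integral_eq_lintegral_of_nonneg_ae (Filter.Eventually.of_forall fun t => P_nonneg hr0 hr1 _)
    ((continuous_P hr0 hr1).comp hd).aestronglyMeasurable]
  exact ENNReal.toReal_le_of_le_ofReal (mul_nonneg pi_pos.le hgε)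
    (setLIntegral_P_le hd.measurable hdπ hr0 hr1 hε.1.le hε.2 hgε hfar hnear)

/-- The far part of the Poisson integral: `∫_{|t-θ| > ε} P_r(t-θ) dμ ≤ π g(ε)`. -/
theorem stmt13 (μ : Measure (AddCircle (2 * π))) [IsFiniteMeasure μ]
    (h g : ℝ → ℝ)
    (hgpos : ∀ t ∈ Set.Ioc (0 : ℝ) π, 0 < g t)
    (hgcont : ContinuousOn g (Set.Ioc (0 : ℝ) π))
    (hganti : AntitoneOn g (Set.Ioc (0 : ℝ) π))
    (hhg : ∀ s ∈ Set.Ioc (0 : ℝ) π, h s ≤ s * g s)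
    (hball : ∀ (θ : AddCircle (2 * π)), ∀ s ∈ Set.Ioc (0 : ℝ) π,
      μ (Metric.closedBall θ s) ≤ ENNReal.ofReal (h s))
    (htot : μ Set.univ ≤ ENNReal.ofReal (π * g π)) :
    ∀ r ∈ Set.Ico (0 : ℝ) 1, ∀ θ : AddCircle (2 * π), ∀ ε ∈ Set.Ioc (0 : ℝ) π,
      ∫ t in {t : AddCircle (2 * π) | ε < ‖t - θ‖}, P r ‖t - θ‖ ∂μ ≤ π * g ε :=
  stmt13_general μ h g hgpos hganti hhg hball htot
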